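/- Let V be a purely even restricted vertex algebra with A = V₀ and 𝒯 = V₁/Ω as above. The operation _{(0)}: V₁ ⊗ A → A vanishes on Ω ⊗ A and makes A a module over the Lie algebra 𝒯 acting by derivations: τ(ab) = τ(a)b + aτ(b). -/
import Mathlib


open scoped BigOperators

/-- The generalized binomial coefficient `C(m, j)` for `m ∈ ℤ`, as a complex number. -/
noncomputable def binom (m : ℤ) (j : ℕ) : ℂ :=
  (∏ i ∈ Finset.range j, ((m : ℂ) - (i : ℂ))) / (Nat.factorial j : ℂ)

/-- A purely even restricted graded vertex algebra: a vertex algebra (vacuum, Fourier modes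
`coeff a n = a_{(n)}`, translation operator `T = ∂`, vacuum axiom, translation invariance and
the Borcherds identity) together with a grading by conformal weights `wt : ℤ → Submodule ℂ V`
(the eigenspace decomposition of the Hamiltonian `H`), with no negative conformal weights,
`vac` of weight `0`, and such that `a_{(n)} : V_Δ ⊗ V_{Δ'} → V_{Δ+Δ'-n-1}`. -/
structure RestrictedVA (V : Type*) [AddCommGroup V] [Module ℂ V] where
  vac : V
  coeff : V → ℤ → Module.End ℂ V
  T : Module.End ℂ V
  wt : ℤ → Submodule ℂ V
  coeff_add : ∀ (a b : V) (n : ℤ), coeff (a + b) n = coeff a n + coeff b n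
  coeff_smul : ∀ (c : ℂ) (a : V) (n : ℤ), coeff (c • a) n = c • coeff a n
  truncation : ∀ a b : V, ∃ N : ℤ, ∀ n ≥ N, coeff a n b = 0
  vac_field : ∀ n : ℤ, coeff vac n = if n = -1 then (1 : Module.End ℂ V) else 0
  T_vac : T vac = 0
  creation_nonneg : ∀ (a : V) (n : ℤ), 0 ≤ n → coeff a n vac = 0
  creation_neg_one : ∀ a : V, coeff a (-1) vac = a
  translation : ∀ (a : V) (n : ℤ),
    T * coeff a n - coeff a n * T = ((-n : ℤ) : ℂ) • coeff a (n - 1)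
  borcherds : ∀ (a b c : V) (m n k : ℤ),
    (∑ᶠ j : ℕ, binom m j • coeff (coeff a (n + j) b) (m + k - j) c) =
      (∑ᶠ j : ℕ, ((-1 : ℂ) ^ j * binom n j) • coeff a (n + m - j) (coeff b (k + j) c)) -
      (∑ᶠ j : ℕ, ((-1 : ℂ) ^ ((j : ℤ) + n) * binom n j) •
        coeff b (n + k - j) (coeff a (m + j) c))
  wt_neg : ∀ d : ℤ, d < 0 → wt d = ⊥
  vac_wt : vac ∈ wt 0
  wt_indep : ∀ d : ℤ, Disjoint (wt d) (⨆ (e : ℤ) (_ : e ≠ d), wt e)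
  wt_top : (⨆ d : ℤ, wt d) = ⊤
  wt_coeff : ∀ {a b : V} {d e : ℤ} (n : ℤ),
    a ∈ wt d → b ∈ wt e → coeff a n b ∈ wt (d + e - n - 1)

/-- The subspace `Ω ⊆ V₁` spanned by the elements `a ∂b` with `a, b ∈ A = V₀`
(the product being `a_{(-1)}`). -/
def RestrictedVA.Omega {V : Type*} [AddCommGroup V] [Module ℂ V] (W : RestrictedVA V) :
    Submodule ℂ V :=
  Submodule.span ℂ {x | ∃ a b : V, a ∈ W.wt 0 ∧ b ∈ W.wt 0 ∧ x = W.coeff a (-1) (W.T b)}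

lemma binom_zero' (m : ℤ) : binom m 0 = 1 := by simp [binom]

lemma binom_zero_of_ne (j : ℕ) (hj : j ≠ 0) : binom 0 j = 0 := by
  have h0 : (0 : ℕ) ∈ Finset.range j := Finset.mem_range.mpr (Nat.pos_of_ne_zero hj)
  simp [binom, Finset.prod_eq_zero h0]

namespace RestrictedVA

variable {V : Type*} [AddCommGroup V] [Module ℂ V] (W : RestrictedVA V)

lemma coeff_zero' (n : ℤ) : W.coeff 0 n = 0 := by
  have h := W.coeff_smul 0 0 n
  simpa using h

lemma mem_wt_neg {x : V} {d : ℤ} (hd : d < 0) (hx : x ∈ W.wt d) : x = 0 := by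
  rw [W.wt_neg d hd] at hx
  simpa using hx

lemma T_eq (b : V) : W.T b = W.coeff b (-2) W.vac := by
  have h := congrArg (fun f : Module.End ℂ V => f W.vac) (W.translation b (-1))
  simp only [LinearMap.sub_apply, Module.End.mul_apply, LinearMap.smul_apply,
    W.T_vac, W.creation_neg_one, map_zero] at h
  norm_num at h
  exact h

lemma T_wt {b : V} (hb : b ∈ W.wt 0) : W.T b ∈ W.wt 1 := by
  rw [W.T_eq]
  have h := W.wt_coeff (-2) hb W.vac_wt
  norm_num at h
  exact h

lemma T_coeff_zero (a c : V) : W.coeff (W.T a) 0 c = 0 := by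
  have hB := W.borcherds a W.vac c 0 (-2) 0
  rw [finsum_eq_single _ 0 (by
        intro j hj
        simp only [binom_zero_of_ne j hj, zero_smul]),
      finsum_eq_single (fun j : ℕ => ((-1 : ℂ) ^ j * binom (-2) j) •
        W.coeff a (-2 + 0 - j) (W.coeff W.vac (0 + j) c)) 0 (by
        intro j hj
        simp only [W.vac_field]
        rw [if_neg (by omega)]
        simp),
      finsum_eq_single (fun j : ℕ => ((-1 : ℂ) ^ ((j : ℤ) + -2) * binom (-2) j) •
        W.coeff W.vac (-2 + 0 - j) (W.coeff a (0 + j) c)) 0 (by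
        intro j hj
        simp only [W.vac_field]
        rw [if_neg (by omega)]
        simp)] at hB
  simp only [W.vac_field, binom_zero'] at hB
  norm_num at hB
  rw [← W.T_eq] at hB
  exact hB

lemma omega_gen {a b c : V} (ha : a ∈ W.wt 0) (hb : b ∈ W.wt 0) (hc : c ∈ W.wt 0) :
    W.coeff (W.coeff a (-1) (W.T b)) 0 c = 0 := by
  have hTb : W.T b ∈ W.wt 1 := W.T_wt hb
  have hB := W.borcherds a (W.T b) c 0 (-1) 0
  rw [finsum_eq_single _ 0 (by
        intro j hj
        simp only [binom_zero_of_ne j hj, zero_smul]),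
      finsum_eq_single (fun j : ℕ => ((-1 : ℂ) ^ j * binom (-1) j) •
        W.coeff a (-1 + 0 - j) (W.coeff (W.T b) (0 + j) c)) 0 (by
        intro j hj
        have hjpos : (1 : ℤ) ≤ (j : ℤ) := by
          exact_mod_cast Nat.one_le_iff_ne_zero.mpr hj
        have hmem := W.wt_coeff (0 + (j : ℤ)) hTb hc
        have hz : W.coeff (W.T b) (0 + j) c = 0 :=
          W.mem_wt_neg (d := 1 + 0 - (0 + (j : ℤ)) - 1) (by omega) hmem
        simp only [hz, map_zero, smul_zero]),
      finsum_eq_single (fun j : ℕ => ((-1 : ℂ) ^ ((j : ℤ) + -1) * binom (-1) j) •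
        W.coeff (W.T b) (-1 + 0 - j) (W.coeff a (0 + j) c)) 0 (by
        intro j hj
        have hmem := W.wt_coeff (0 + (j : ℤ)) ha hc
        have hz : W.coeff a (0 + j) c = 0 :=
          W.mem_wt_neg (d := 0 + 0 - (0 + (j : ℤ)) - 1) (by omega) hmem
        simp only [hz, map_zero, smul_zero])] at hB
  have h1 : W.coeff (W.T b) ((0 : ℤ) + (0 : ℕ)) c = 0 := by
    norm_num
    exact W.T_coeff_zero b c
  have h2 : W.coeff a ((0 : ℤ) + (0 : ℕ)) c = 0 := by
    have hmem := W.wt_coeff (0 + ((0 : ℕ) : ℤ)) ha hc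
    exact W.mem_wt_neg (d := 0 + 0 - (0 + ((0 : ℕ) : ℤ)) - 1) (by omega) hmem
  rw [h1, h2] at hB
  simp only [map_zero, smul_zero, sub_zero, binom_zero'] at hB
  norm_num at hB
  exact hB

end RestrictedVA

/-- In a purely even restricted vertex algebra with `A = V₀` and `𝒯 = V₁/Ω`,
the operation `_{(0)} : V₁ ⊗ A → A` vanishes on `Ω ⊗ A` and makes `A` a module over the Lie
algebra `𝒯` acting by derivations: `τ(ab) = τ(a)b + aτ(b)`. -/
theorem weight_zero_module_derivations {V : Type*} [AddCommGroup V] [Module ℂ V]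
    (W : RestrictedVA V) :
    (∀ x a : V, x ∈ W.wt 1 → a ∈ W.wt 0 → W.coeff x 0 a ∈ W.wt 0) ∧
    (∀ x a : V, x ∈ W.Omega → a ∈ W.wt 0 → W.coeff x 0 a = 0) ∧
    (∀ x y a : V, x ∈ W.wt 1 → y ∈ W.wt 1 → a ∈ W.wt 0 →
      W.coeff (W.coeff x 0 y) 0 a = W.coeff x 0 (W.coeff y 0 a) - W.coeff y 0 (W.coeff x 0 a)) ∧
    (∀ x a b : V, x ∈ W.wt 1 → a ∈ W.wt 0 → b ∈ W.wt 0 →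
      W.coeff x 0 (W.coeff a (-1) b) =
        W.coeff (W.coeff x 0 a) (-1) b + W.coeff a (-1) (W.coeff x 0 b)) := by
  refine ⟨?_, ?_, ?_, ?_⟩
  · intro x a hx ha
    have h := W.wt_coeff 0 hx ha
    norm_num at h
    exact h
  · intro x a hx ha
    induction hx using Submodule.span_induction with
    | mem y hy =>
      obtain ⟨p, q, hp, hq, rfl⟩ := hy
      exact W.omega_gen hp hq ha
    | zero => rw [W.coeff_zero']; rfl
    | add y z _ _ hy hz =>
      rw [W.coeff_add, LinearMap.add_apply, hy, hz, add_zero]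
    | smul c y _ hy =>
      rw [W.coeff_smul, LinearMap.smul_apply, hy, smul_zero]
  · intro x y a hx hy ha
    have hB := W.borcherds x y a 0 0 0
    rw [finsum_eq_single _ 0 (by
          intro j hj
          simp only [binom_zero_of_ne j hj, zero_smul]),
        finsum_eq_single (fun j : ℕ => ((-1 : ℂ) ^ j * binom 0 j) •
          W.coeff x (0 + 0 - j) (W.coeff y (0 + j) a)) 0 (by
          intro j hj
          simp only [binom_zero_of_ne j hj, mul_zero, zero_smul]),
        finsum_eq_single (fun j : ℕ => ((-1 : ℂ) ^ ((j : ℤ) + 0) * binom 0 j) •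
          W.coeff y (0 + 0 - j) (W.coeff x (0 + j) a)) 0 (by
          intro j hj
          simp only [binom_zero_of_ne j hj, mul_zero, zero_smul])] at hB
    simp only [binom_zero'] at hB
    norm_num at hB
    exact hB
  · intro x a b hx ha hb
    have hB := W.borcherds x a b 0 0 (-1)
    rw [finsum_eq_single _ 0 (by
          intro j hj
          simp only [binom_zero_of_ne j hj, zero_smul]),
        finsum_eq_single (fun j : ℕ => ((-1 : ℂ) ^ j * binom 0 j) •
          W.coeff x (0 + 0 - j) (W.coeff a (-1 + j) b)) 0 (by
          intro j hj
          simp only [binom_zero_of_ne j hj, mul_zero, zero_smul]),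
        finsum_eq_single (fun j : ℕ => ((-1 : ℂ) ^ ((j : ℤ) + 0) * binom 0 j) •
          W.coeff a (0 + -1 - j) (W.coeff x (0 + j) b)) 0 (by
          intro j hj
          simp only [binom_zero_of_ne j hj, mul_zero, zero_smul])] at hB
    simp only [binom_zero'] at hB
    norm_num at hB
    rw [eq_sub_iff_add_eq] at hB
    exact hB.symm
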